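/- The equation y‴ = 0, rewritten in new coordinates (x̃, ỹ) via a point transformation with inverse (x(x̃,ỹ), y(x̃,ỹ)) having nonzero Jacobian, takes the form ỹ‴ = 3 x_{0.1}(ỹ″)²/(x_{1.0} + x_{0.1} ỹ′) + N(ỹ′, ỹ″)/[(x_{1.0} + x_{0.1} ỹ′)(y_{1.0} x_{0.1} − x_{1.0} y_{0.1})], where N is a polynomial in ỹ′ of degree ≤ 5 and affine in ỹ″ (i.e., N = a₃ ỹ″(ỹ′)² + a₄ ỹ″ ỹ′ + a₅ ỹ″ + a₆(ỹ′)⁵ + a₇(ỹ′)⁴ + a₈(ỹ′)³ + a₉(ỹ′)² + a₁₀ ỹ′ + a₁₁ with coefficients depending only on (x̃,ỹ)). -/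

import Mathlib

/-- Partial derivative with respect to the first plane coordinate (here `x̃`). -/
noncomputable def pdx (f : ℝ × ℝ → ℝ) : ℝ × ℝ → ℝ :=
  fun p => deriv (fun s => f (s, p.2)) p.1

/-- Partial derivative with respect to the second plane coordinate (here `ỹ`). -/
noncomputable def pdy (f : ℝ × ℝ → ℝ) : ℝ × ℝ → ℝ :=
  fun p => deriv (fun s => f (p.1, s)) p.2

/-- Iterated partial derivative `Φ_{i.j} = ∂^{i+j}Φ/∂x̃^i∂ỹ^j`. -/
noncomputable def pd (f : ℝ × ℝ → ℝ) (i j : ℕ) : ℝ × ℝ → ℝ :=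
  pdx^[i] (pdy^[j] f)

/-- The 3-jet of `f` at `p`: all partial derivatives of order ≤ 3 (and `0` beyond). -/
noncomputable def jet3 (f : ℝ × ℝ → ℝ) (p : ℝ × ℝ) : ℕ → ℕ → ℝ :=
  fun i j => if i + j ≤ 3 then pd f i j p else 0

/-- Derivative of `η` regarded as a function of `ξ` along the parametrized curve
`t ↦ (ξ t, η t)`: `dη/dξ = (dη/dt)/(dξ/dt)`. -/
noncomputable def curveSlope (ξ η : ℝ → ℝ) : ℝ → ℝ :=
  fun t => deriv η t / deriv ξ t


open scoped ContDiff

lemma pdx_eq_fderiv (g : ℝ × ℝ → ℝ) (hg : Differentiable ℝ g) (p : ℝ × ℝ) :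
    pdx g p = fderiv ℝ g p (1, 0) := by
  have h1 : HasDerivAt (fun s : ℝ => (s, p.2)) ((1:ℝ), (0:ℝ)) p.1 :=
    (hasDerivAt_id p.1).prodMk (hasDerivAt_const p.1 p.2)
  have h2 : HasDerivAt (fun s : ℝ => g (s, p.2)) (fderiv ℝ g p (1, 0)) p.1 := by
    have := ((hg p).hasFDerivAt).comp_hasDerivAt (l := g) p.1 h1
    exact this
  exact h2.deriv

lemma pdy_eq_fderiv (g : ℝ × ℝ → ℝ) (hg : Differentiable ℝ g) (p : ℝ × ℝ) :
    pdy g p = fderiv ℝ g p (0, 1) := by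
  have h1 : HasDerivAt (fun s : ℝ => (p.1, s)) ((0:ℝ), (1:ℝ)) p.2 :=
    (hasDerivAt_const p.2 p.1).prodMk (hasDerivAt_id p.2)
  have h2 : HasDerivAt (fun s : ℝ => g (p.1, s)) (fderiv ℝ g p (0, 1)) p.2 := by
    have := ((hg p).hasFDerivAt).comp_hasDerivAt (l := g) p.2 h1
    exact this
  exact h2.deriv

lemma contDiff_pdx {g : ℝ × ℝ → ℝ} (hg : ContDiff ℝ ∞ g) : ContDiff ℝ ∞ (pdx g) := by
  have hd : Differentiable ℝ g := hg.differentiable (by norm_num)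
  have : pdx g = fun p => fderiv ℝ g p (1, 0) := funext fun p => pdx_eq_fderiv g hd p
  rw [this]
  exact ((contDiff_infty_iff_fderiv.mp hg).2).clm_apply contDiff_const

lemma contDiff_pdy {g : ℝ × ℝ → ℝ} (hg : ContDiff ℝ ∞ g) : ContDiff ℝ ∞ (pdy g) := by
  have hd : Differentiable ℝ g := hg.differentiable (by norm_num)
  have : pdy g = fun p => fderiv ℝ g p (0, 1) := funext fun p => pdy_eq_fderiv g hd p
  rw [this]
  exact ((contDiff_infty_iff_fderiv.mp hg).2).clm_apply contDiff_const

lemma pdx_pdy_comm {g : ℝ × ℝ → ℝ} (hg : ContDiff ℝ ∞ g) : pdx (pdy g) = pdy (pdx g) := by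
  have hd : Differentiable ℝ g := hg.differentiable (by norm_num)
  have hfd : ContDiff ℝ ∞ (fderiv ℝ g) := (contDiff_infty_iff_fderiv.mp hg).2
  have hfdd : Differentiable ℝ (fderiv ℝ g) := hfd.differentiable (by norm_num)
  funext p
  have hx : pdx g = fun q => fderiv ℝ g q (1, 0) := funext fun q => pdx_eq_fderiv g hd q
  have hy : pdy g = fun q => fderiv ℝ g q (0, 1) := funext fun q => pdy_eq_fderiv g hd q
  have hsymm : ∀ v w, fderiv ℝ (fderiv ℝ g) p v w = fderiv ℝ (fderiv ℝ g) p w v :=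
    second_derivative_symmetric (fun y => (hd y).hasFDerivAt) ((hfdd p).hasFDerivAt)
  have e1 : pdx (pdy g) p = fderiv ℝ (fderiv ℝ g) p (1, 0) (0, 1) := by
    rw [pdx_eq_fderiv (pdy g) ((contDiff_pdy hg).differentiable (by norm_num)) p, hy]
    rw [fderiv_clm_apply (hfdd p) (differentiableAt_const _)]
    simp
  have e2 : pdy (pdx g) p = fderiv ℝ (fderiv ℝ g) p (0, 1) (1, 0) := by
    rw [pdy_eq_fderiv (pdx g) ((contDiff_pdx hg).differentiable (by norm_num)) p, hx]
    rw [fderiv_clm_apply (hfdd p) (differentiableAt_const _)]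
    simp
  rw [e1, e2, hsymm]


lemma contDiff_pdx_iter {g : ℝ × ℝ → ℝ} (hg : ContDiff ℝ ∞ g) (i : ℕ) :
    ContDiff ℝ ∞ (pdx^[i] g) := by
  induction i with
  | zero => exact hg
  | succ n ih => rw [Function.iterate_succ_apply']; exact contDiff_pdx ih

lemma contDiff_pdy_iter {g : ℝ × ℝ → ℝ} (hg : ContDiff ℝ ∞ g) (j : ℕ) :
    ContDiff ℝ ∞ (pdy^[j] g) := by
  induction j with
  | zero => exact hg
  | succ n ih => rw [Function.iterate_succ_apply']; exact contDiff_pdy ih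

lemma contDiff_pd {f : ℝ × ℝ → ℝ} (hf : ContDiff ℝ ∞ f) (i j : ℕ) :
    ContDiff ℝ ∞ (pd f i j) :=
  contDiff_pdx_iter (contDiff_pdy_iter hf j) i

lemma pdx_pd {f : ℝ × ℝ → ℝ} (i j : ℕ) : pdx (pd f i j) = pd f (i+1) j := by
  simp [pd, Function.iterate_succ_apply']

lemma pdy_iterate {g : ℝ × ℝ → ℝ} (hg : ContDiff ℝ ∞ g) (i : ℕ) :
    pdy (pdx^[i] g) = pdx^[i] (pdy g) := by
  induction i generalizing g with
  | zero => rfl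
  | succ n ih =>
    rw [Function.iterate_succ_apply', Function.iterate_succ_apply',
      ← pdx_pdy_comm (contDiff_pdx_iter hg n), ih hg]

lemma pdy_pd {f : ℝ × ℝ → ℝ} (hf : ContDiff ℝ ∞ f) (i j : ℕ) :
    pdy (pd f i j) = pd f i (j+1) := by
  rw [pd, pdy_iterate (contDiff_pdy_iter hf j) i, pd, Function.iterate_succ_apply']

lemma hasDerivAt_curve {g : ℝ × ℝ → ℝ} (hg : ContDiff ℝ ∞ g) {Y : ℝ → ℝ}
    (hY : ContDiff ℝ ∞ Y) (t : ℝ) :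
    HasDerivAt (fun s => g (s, Y s)) (pdx g (t, Y t) + pdy g (t, Y t) * deriv Y t) t := by
  have hd : Differentiable ℝ g := hg.differentiable (by norm_num)
  have hYd : HasDerivAt Y (deriv Y t) t :=
    ((hY.differentiable (by norm_num)) t).hasDerivAt
  have h1 : HasDerivAt (fun s : ℝ => (s, Y s)) ((1:ℝ), deriv Y t) t :=
    (hasDerivAt_id t).prodMk hYd
  have h2 := ((hd (t, Y t)).hasFDerivAt).comp_hasDerivAt (l := g) t h1
  have h3 : fderiv ℝ g (t, Y t) (1, deriv Y t)
      = pdx g (t, Y t) + pdy g (t, Y t) * deriv Y t := by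
    have : ((1:ℝ), deriv Y t) = ((1:ℝ), (0:ℝ)) + deriv Y t • ((0:ℝ), (1:ℝ)) := by
      simp
    rw [this, map_add, map_smul, pdx_eq_fderiv g hd, pdy_eq_fderiv g hd,
      smul_eq_mul, mul_comm]
  rw [← h3]; exact h2

lemma hasDerivAt_curve_pd {f : ℝ × ℝ → ℝ} (hf : ContDiff ℝ ∞ f) (i j : ℕ) {Y : ℝ → ℝ}
    (hY : ContDiff ℝ ∞ Y) (t : ℝ) :
    HasDerivAt (fun s => pd f i j (s, Y s))
      (pd f (i+1) j (t, Y t) + pd f i (j+1) (t, Y t) * deriv Y t) t := by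
  have := hasDerivAt_curve (contDiff_pd hf i j) hY t
  rwa [pdx_pd, pdy_pd hf] at this

noncomputable def stmt4A : Fin 9 → (ℕ → ℕ → ℝ) → (ℕ → ℕ → ℝ) → ℝ :=
  fun k jx jy =>
    if (k : ℕ) = 0 then (3*(jx 0 1)*(jy 0 1)*(jx 1 1) + 3*(jx 0 1)*(jy 1 0)*(jx 0 2) - 3*(jx 0 1)*(jx 0 1)*(jy 1 1) - 6*(jx 1 0)*(jy 0 1)*(jx 0 2) + 3*(jx 1 0)*(jx 0 1)*(jy 0 2))
    else
    if (k : ℕ) = 1 then (3*(jx 0 1)*(jy 0 1)*(jx 2 0) + 9*(jx 0 1)*(jy 1 0)*(jx 1 1) - 3*(jx 0 1)*(jx 0 1)*(jy 2 0) - 9*(jx 1 0)*(jy 0 1)*(jx 1 1) - 3*(jx 1 0)*(jy 1 0)*(jx 0 2) + 3*(jx 1 0)*(jx 1 0)*(jy 0 2))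
    else
    if (k : ℕ) = 2 then (6*(jx 0 1)*(jy 1 0)*(jx 2 0) - 3*(jx 1 0)*(jy 0 1)*(jx 2 0) - 3*(jx 1 0)*(jy 1 0)*(jx 1 1) - 3*(jx 1 0)*(jx 0 1)*(jy 2 0) + 3*(jx 1 0)*(jx 1 0)*(jy 1 1))
    else
    if (k : ℕ) = 3 then (3*(jy 0 1)*(jx 0 2)*(jx 0 2) - 3*(jx 0 1)*(jx 0 2)*(jy 0 2) - (jx 0 1)*(jy 0 1)*(jx 0 3) + (jx 0 1)*(jx 0 1)*(jy 0 3))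
    else
    if (k : ℕ) = 4 then (12*(jy 0 1)*(jx 1 1)*(jx 0 2) + 3*(jy 1 0)*(jx 0 2)*(jx 0 2) - 6*(jx 0 1)*(jx 0 2)*(jy 1 1) - 6*(jx 0 1)*(jx 1 1)*(jy 0 2) - 3*(jx 0 1)*(jy 0 1)*(jx 1 2) - (jx 0 1)*(jy 1 0)*(jx 0 3) + 3*(jx 0 1)*(jx 0 1)*(jy 1 2) - 3*(jx 1 0)*(jx 0 2)*(jy 0 2) - (jx 1 0)*(jy 0 1)*(jx 0 3) + 2*(jx 1 0)*(jx 0 1)*(jy 0 3))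
    else
    if (k : ℕ) = 5 then (12*(jy 0 1)*(jx 1 1)*(jx 1 1) + 6*(jy 0 1)*(jx 2 0)*(jx 0 2) + 12*(jy 1 0)*(jx 1 1)*(jx 0 2) - 3*(jx 0 1)*(jx 0 2)*(jy 2 0) - 12*(jx 0 1)*(jx 1 1)*(jy 1 1) - 3*(jx 0 1)*(jx 2 0)*(jy 0 2) - 3*(jx 0 1)*(jy 0 1)*(jx 2 1) - 3*(jx 0 1)*(jy 1 0)*(jx 1 2) + 3*(jx 0 1)*(jx 0 1)*(jy 2 1) - 6*(jx 1 0)*(jx 0 2)*(jy 1 1) - 6*(jx 1 0)*(jx 1 1)*(jy 0 2) - 3*(jx 1 0)*(jy 0 1)*(jx 1 2) - (jx 1 0)*(jy 1 0)*(jx 0 3) + 6*(jx 1 0)*(jx 0 1)*(jy 1 2) + (jx 1 0)*(jx 1 0)*(jy 0 3))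
    else
    if (k : ℕ) = 6 then (12*(jy 0 1)*(jx 2 0)*(jx 1 1) + 12*(jy 1 0)*(jx 1 1)*(jx 1 1) + 6*(jy 1 0)*(jx 2 0)*(jx 0 2) - 6*(jx 0 1)*(jx 1 1)*(jy 2 0) - 6*(jx 0 1)*(jx 2 0)*(jy 1 1) - (jx 0 1)*(jy 0 1)*(jx 3 0) - 3*(jx 0 1)*(jy 1 0)*(jx 2 1) + (jx 0 1)*(jx 0 1)*(jy 3 0) - 3*(jx 1 0)*(jx 0 2)*(jy 2 0) - 12*(jx 1 0)*(jx 1 1)*(jy 1 1) - 3*(jx 1 0)*(jx 2 0)*(jy 0 2) - 3*(jx 1 0)*(jy 0 1)*(jx 2 1) - 3*(jx 1 0)*(jy 1 0)*(jx 1 2) + 6*(jx 1 0)*(jx 0 1)*(jy 2 1) + 3*(jx 1 0)*(jx 1 0)*(jy 1 2))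
    else
    if (k : ℕ) = 7 then (3*(jy 0 1)*(jx 2 0)*(jx 2 0) + 12*(jy 1 0)*(jx 2 0)*(jx 1 1) - 3*(jx 0 1)*(jx 2 0)*(jy 2 0) - (jx 0 1)*(jy 1 0)*(jx 3 0) - 6*(jx 1 0)*(jx 1 1)*(jy 2 0) - 6*(jx 1 0)*(jx 2 0)*(jy 1 1) - (jx 1 0)*(jy 0 1)*(jx 3 0) - 3*(jx 1 0)*(jy 1 0)*(jx 2 1) + 2*(jx 1 0)*(jx 0 1)*(jy 3 0) + 3*(jx 1 0)*(jx 1 0)*(jy 2 1))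
    else
    (3*(jy 1 0)*(jx 2 0)*(jx 2 0) - 3*(jx 1 0)*(jx 2 0)*(jy 2 0) - (jx 1 0)*(jy 1 0)*(jx 3 0) + (jx 1 0)*(jx 1 0)*(jy 3 0))

set_option maxHeartbeats 4000000 in
set_option maxRecDepth 100000 in
/-- The equation `y‴ = 0`, rewritten in the new coordinates `(x̃, ỹ)`
via a point transformation with inverse `(x(x̃,ỹ), y(x̃,ỹ))` of nonzero Jacobian,
takes the form
`ỹ‴ = 3 x₀₁ ỹ″²/(x₁₀ + x₀₁ ỹ′) + N(ỹ′, ỹ″)/[(x₁₀ + x₀₁ ỹ′)(y₁₀ x₀₁ − x₁₀ y₀₁)]`,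
where `N = a₃ ỹ″ ỹ′² + a₄ ỹ″ ỹ′ + a₅ ỹ″ + a₆ ỹ′⁵ + a₇ ỹ′⁴ + a₈ ỹ′³ + a₉ ỹ′²
 + a₁₀ ỹ′ + a₁₁` is polynomial of degree ≤ 5 in `ỹ′`, affine in `ỹ″`, with
coefficients depending only on `(x̃,ỹ)` (through the ≤3-jet of the inverse map). -/
theorem stmt4 :
    ∃ A : Fin 9 → ((ℕ → ℕ → ℝ) → (ℕ → ℕ → ℝ) → ℝ),
      ∀ (x y : ℝ × ℝ → ℝ) (Y : ℝ → ℝ),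
        ContDiff ℝ (⊤ : ℕ∞) x → ContDiff ℝ (⊤ : ℕ∞) y → ContDiff ℝ (⊤ : ℕ∞) Y →
        ∀ t : ℝ,
          pd y 1 0 (t, Y t) * pd x 0 1 (t, Y t)
              - pd x 1 0 (t, Y t) * pd y 0 1 (t, Y t) ≠ 0 →
          pd x 1 0 (t, Y t) + pd x 0 1 (t, Y t) * deriv Y t ≠ 0 →
          -- the original curve satisfies `y‴ = 0`:
          curveSlope (fun s => x (s, Y s))
              (curveSlope (fun s => x (s, Y s))
                (curveSlope (fun s => x (s, Y s)) (fun s => y (s, Y s)))) t = 0 →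
          deriv (deriv (deriv Y)) t =
            3 * pd x 0 1 (t, Y t) * (deriv (deriv Y) t) ^ 2 /
                (pd x 1 0 (t, Y t) + pd x 0 1 (t, Y t) * deriv Y t)
              + (A 0 (jet3 x (t, Y t)) (jet3 y (t, Y t)) *
                    deriv (deriv Y) t * (deriv Y t) ^ 2
                  + A 1 (jet3 x (t, Y t)) (jet3 y (t, Y t)) *
                      deriv (deriv Y) t * deriv Y t
                  + A 2 (jet3 x (t, Y t)) (jet3 y (t, Y t)) * deriv (deriv Y) t
                  + A 3 (jet3 x (t, Y t)) (jet3 y (t, Y t)) * (deriv Y t) ^ 5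
                  + A 4 (jet3 x (t, Y t)) (jet3 y (t, Y t)) * (deriv Y t) ^ 4
                  + A 5 (jet3 x (t, Y t)) (jet3 y (t, Y t)) * (deriv Y t) ^ 3
                  + A 6 (jet3 x (t, Y t)) (jet3 y (t, Y t)) * (deriv Y t) ^ 2
                  + A 7 (jet3 x (t, Y t)) (jet3 y (t, Y t)) * deriv Y t
                  + A 8 (jet3 x (t, Y t)) (jet3 y (t, Y t))) /
                ((pd x 1 0 (t, Y t) + pd x 0 1 (t, Y t) * deriv Y t) *
                  (pd y 1 0 (t, Y t) * pd x 0 1 (t, Y t)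
                    - pd x 1 0 (t, Y t) * pd y 0 1 (t, Y t))) := by
  refine ⟨stmt4A, ?_⟩
  intro x y Y hx hy hYtop t hJ hU H
  have hx' : ContDiff ℝ ∞ x := hx.of_le (by simp)
  have hy' : ContDiff ℝ ∞ y := hy.of_le (by simp)
  have hY' : ContDiff ℝ ∞ Y := hYtop.of_le (by simp)
  have hY1 : ContDiff ℝ ∞ (deriv Y) := (contDiff_infty_iff_deriv.mp hY').2
  have hY1d : Differentiable ℝ (deriv Y) := (contDiff_infty_iff_deriv.mp hY1).1
  have hY2d : Differentiable ℝ (deriv (deriv Y)) :=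
    ((contDiff_infty_iff_deriv.mp hY1).2).differentiable (by norm_num)
  have hdU : ∀ s, HasDerivAt (fun s' => x (s', Y s')) (pd x 1 0 (s, Y s) + pd x 0 1 (s, Y s) * deriv Y s) s :=
    fun s => hasDerivAt_curve_pd hx' 0 0 hY' s
  have hdV : ∀ s, HasDerivAt (fun s' => y (s', Y s')) (pd y 1 0 (s, Y s) + pd y 0 1 (s, Y s) * deriv Y s) s :=
    fun s => hasDerivAt_curve_pd hy' 0 0 hY' s
  have hderivu : deriv (fun s' => x (s', Y s')) = fun s => pd x 1 0 (s, Y s) + pd x 0 1 (s, Y s) * deriv Y s :=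
    funext fun s => (hdU s).deriv
  have hderivv : deriv (fun s' => y (s', Y s')) = fun s => pd y 1 0 (s, Y s) + pd y 0 1 (s, Y s) * deriv Y s :=
    funext fun s => (hdV s).deriv
  have hdU2 : ∀ s, HasDerivAt (fun s' => pd x 1 0 (s', Y s') + pd x 0 1 (s', Y s') * deriv Y s') ((pd x 2 0 (s, Y s) + pd x 1 1 (s, Y s) * deriv Y s) + ((pd x 1 1 (s, Y s) + pd x 0 2 (s, Y s) * deriv Y s) * deriv Y s + pd x 0 1 (s, Y s) * deriv (deriv Y) s)) s :=
    fun s => (hasDerivAt_curve_pd hx' 1 0 hY' s).add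
      ((hasDerivAt_curve_pd hx' 0 1 hY' s).mul ((hY1d s).hasDerivAt))
  have hdV2 : ∀ s, HasDerivAt (fun s' => pd y 1 0 (s', Y s') + pd y 0 1 (s', Y s') * deriv Y s') ((pd y 2 0 (s, Y s) + pd y 1 1 (s, Y s) * deriv Y s) + ((pd y 1 1 (s, Y s) + pd y 0 2 (s, Y s) * deriv Y s) * deriv Y s + pd y 0 1 (s, Y s) * deriv (deriv Y) s)) s :=
    fun s => (hasDerivAt_curve_pd hy' 1 0 hY' s).add
      ((hasDerivAt_curve_pd hy' 0 1 hY' s).mul ((hY1d s).hasDerivAt))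
  have hdU3 : HasDerivAt (fun s => (pd x 2 0 (s, Y s) + pd x 1 1 (s, Y s) * deriv Y s) + ((pd x 1 1 (s, Y s) + pd x 0 2 (s, Y s) * deriv Y s) * deriv Y s + pd x 0 1 (s, Y s) * deriv (deriv Y) s)) (((pd x 3 0 (t, Y t) + pd x 2 1 (t, Y t) * deriv Y t) + ((pd x 2 1 (t, Y t) + pd x 1 2 (t, Y t) * deriv Y t) * deriv Y t + pd x 1 1 (t, Y t) * deriv (deriv Y) t)) + ((((pd x 2 1 (t, Y t) + pd x 1 2 (t, Y t) * deriv Y t) + ((pd x 1 2 (t, Y t) + pd x 0 3 (t, Y t) * deriv Y t) * deriv Y t + pd x 0 2 (t, Y t) * deriv (deriv Y) t)) * deriv Y t + (pd x 1 1 (t, Y t) + pd x 0 2 (t, Y t) * deriv Y t) * deriv (deriv Y) t) + ((pd x 1 1 (t, Y t) + pd x 0 2 (t, Y t) * deriv Y t) * deriv (deriv Y) t + pd x 0 1 (t, Y t) * deriv (deriv (deriv Y)) t))) t :=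
    ((hasDerivAt_curve_pd hx' 2 0 hY' t).add
      ((hasDerivAt_curve_pd hx' 1 1 hY' t).mul ((hY1d t).hasDerivAt))).add
     ((((hasDerivAt_curve_pd hx' 1 1 hY' t).add
        ((hasDerivAt_curve_pd hx' 0 2 hY' t).mul ((hY1d t).hasDerivAt))).mul
        ((hY1d t).hasDerivAt)).add
      ((hasDerivAt_curve_pd hx' 0 1 hY' t).mul ((hY2d t).hasDerivAt)))
  have hdV3 : HasDerivAt (fun s => (pd y 2 0 (s, Y s) + pd y 1 1 (s, Y s) * deriv Y s) + ((pd y 1 1 (s, Y s) + pd y 0 2 (s, Y s) * deriv Y s) * deriv Y s + pd y 0 1 (s, Y s) * deriv (deriv Y) s)) (((pd y 3 0 (t, Y t) + pd y 2 1 (t, Y t) * deriv Y t) + ((pd y 2 1 (t, Y t) + pd y 1 2 (t, Y t) * deriv Y t) * deriv Y t + pd y 1 1 (t, Y t) * deriv (deriv Y) t)) + ((((pd y 2 1 (t, Y t) + pd y 1 2 (t, Y t) * deriv Y t) + ((pd y 1 2 (t, Y t) + pd y 0 3 (t, Y t) * deriv Y t) * deriv Y t + pd y 0 2 (t, Y t)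 * deriv (deriv Y) t)) * deriv Y t + (pd y 1 1 (t, Y t) + pd y 0 2 (t, Y t) * deriv Y t) * deriv (deriv Y) t) + ((pd y 1 1 (t, Y t) + pd y 0 2 (t, Y t) * deriv Y t) * deriv (deriv Y) t + pd y 0 1 (t, Y t) * deriv (deriv (deriv Y)) t))) t :=
    ((hasDerivAt_curve_pd hy' 2 0 hY' t).add
      ((hasDerivAt_curve_pd hy' 1 1 hY' t).mul ((hY1d t).hasDerivAt))).add
     ((((hasDerivAt_curve_pd hy' 1 1 hY' t).add
        ((hasDerivAt_curve_pd hy' 0 2 hY' t).mul ((hY1d t).hasDerivAt))).mul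
        ((hY1d t).hasDerivAt)).add
      ((hasDerivAt_curve_pd hy' 0 1 hY' t).mul ((hY2d t).hasDerivAt)))
  unfold curveSlope at H
  simp only [hderivu, hderivv] at H
  have H1 : deriv (fun a => deriv (fun b => (pd y 1 0 (b, Y b) + pd y 0 1 (b, Y b) * deriv Y b) / (pd x 1 0 (b, Y b) + pd x 0 1 (b, Y b) * deriv Y b)) a / (pd x 1 0 (a, Y a) + pd x 0 1 (a, Y a) * deriv Y a)) t = 0 := by
    rcases div_eq_zero_iff.mp H with h | h
    · exact h
    · exact absurd h hU
  have hev : ∀ᶠ s in nhds t, (pd x 1 0 (s, Y s) + pd x 0 1 (s, Y s) * deriv Y s) ≠ 0 :=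
    (hdU2 t).continuousAt.eventually_ne hU
  have hderivw1 : ∀ᶠ s in nhds t,
      deriv (fun b => (pd y 1 0 (b, Y b) + pd y 0 1 (b, Y b) * deriv Y b) / (pd x 1 0 (b, Y b) + pd x 0 1 (b, Y b) * deriv Y b)) s = (((pd y 2 0 (s, Y s) + pd y 1 1 (s, Y s) * deriv Y s) + ((pd y 1 1 (s, Y s) + pd y 0 2 (s, Y s) * deriv Y s) * deriv Y s + pd y 0 1 (s, Y s) * deriv (deriv Y) s)) * (pd x 1 0 (s, Y s) + pd x 0 1 (s, Y s) * deriv Y s) - (pd y 1 0 (s, Y s) + pd y 0 1 (s, Y s) * deriv Y s) * ((pd x 2 0 (s, Y s) + pd x 1 1 (s, Y s) * deriv Y s) + ((pd x 1 1 (s, Y s) + pd x 0 2 (s, Y s) * deriv Y s) * deriv Y s + pd x 0 1 (s, Y s) * deriv (deriv Y) s))) / (pd x 1 0 (s, Y s) + pd x 0 1 (s, Y s) * deriv Y s) ^ 2 := by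
    filter_upwards [hev] with s hs
    exact ((hdV2 s).div (hdU2 s) hs).deriv
  have hw2ev : (fun a => deriv (fun b => (pd y 1 0 (b, Y b) + pd y 0 1 (b, Y b) * deriv Y b) / (pd x 1 0 (b, Y b) + pd x 0 1 (b, Y b) * deriv Y b)) a / (pd x 1 0 (a, Y a) + pd x 0 1 (a, Y a) * deriv Y a)) =ᶠ[nhds t] (fun a => ((((pd y 2 0 (a, Y a) + pd y 1 1 (a, Y a) * deriv Y a) + ((pd y 1 1 (a, Y a) + pd y 0 2 (a, Y a) * deriv Y a) * deriv Y a + pd y 0 1 (a, Y a) * deriv (deriv Y) a)) * (pd x 1 0 (a, Y a) + pd x 0 1 (a, Y a) * deriv Y a) - (pd y 1 0 (a, Y a) + pd y 0 1 (a, Y a) * deriv Y a) * ((pd x 2 0 (a, Y a) + pd x 1 1 (a, Y a) * deriv Y a) + ((pd x 1 1 (a, Y a) + pd x 0 2 (a, Y a) * deriv Y a) * deriv Y a + pd x 0 1 (a, Y a) * deriv (deriv Y) a))) / (pd x 1 0 (a, Y a) + pd x 0 1 (a, Y a) * deriv Y a) ^ 2) / (pd x 1 0 (a, Y a) + pd x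 0 1 (a, Y a) * deriv Y a)) := by
    filter_upwards [hderivw1] with s hs
    simp only [hs]
  have hD : deriv (fun a => deriv (fun b => (pd y 1 0 (b, Y b) + pd y 0 1 (b, Y b) * deriv Y b) / (pd x 1 0 (b, Y b) + pd x 0 1 (b, Y b) * deriv Y b)) a / (pd x 1 0 (a, Y a) + pd x 0 1 (a, Y a) * deriv Y a)) t = deriv (fun a => ((((pd y 2 0 (a, Y a) + pd y 1 1 (a, Y a) * deriv Y a) + ((pd y 1 1 (a, Y a) + pd y 0 2 (a, Y a) * deriv Y a) * deriv Y a + pd y 0 1 (a, Y a) * deriv (deriv Y) a)) * (pd x 1 0 (a, Y a) + pd x 0 1 (a, Y a) * deriv Y a) - (pd y 1 0 (a, Y a) + pd y 0 1 (a, Y a) * deriv Y a) * ((pd x 2 0 (a, Y a) + pd x 1 1 (a, Y a) * deriv Y a) + ((pd x 1 1 (a, Y a) + pd x 0 2 (a, Y a) * deriv Y a) * deriv Y a + pd x 0 1 (a, Y a) * deriv (deriv Y) a))) / (pd x 1 0 (a, Y a) + pd x 0 1 (a, Y a) * deriv Y a) ^ 2) / (pd x 1 0 (a, Y a) + pd x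 0 1 (a, Y a) * deriv Y a)) t := hw2ev.deriv_eq
  have hg2 := ((((hdV3.mul (hdU2 t)).sub ((hdV2 t).mul hdU3)).div
      ((hdU2 t).pow 2) (pow_ne_zero 2 hU)).div (hdU2 t) hU)
  have h2 := hg2.deriv
  simp only [Pi.mul_def, Pi.sub_def, Pi.div_def, Pi.pow_def] at h2
  rw [← hD, H1] at h2
  field_simp [hU] at h2
  have K : (((pd y 3 0 (t, Y t) + 3 * pd y 2 1 (t, Y t) * deriv Y t + 3 * pd y 1 2 (t, Y t) * deriv Y t ^ 2 + pd y 0 3 (t, Y t) * deriv Y t ^ 3 + 3 * pd y 1 1 (t, Y t) * deriv (deriv Y) t + 3 * pd y 0 2 (t, Y t) * deriv Y t * deriv (deriv Y) t + pd y 0 1 (t, Y t) * deriv (deriv (deriv Y)) t) * (pd x 1 0 (t, Y t) + pd x 0 1 (t, Y t) * deriv Y t) - (pd y 1 0 (t, Y t) + pd y 0 1 (t, Y t) * deriv Y t) * (pd x 3 0 (t, Y t) + 3 * pd x 2 1 (t, Y t) * deriv Y t + 3 * pd x 1 2 (t, Y t) * deriv Y t ^ 2 + pd x 0 3 (t, Y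 t) * deriv Y t ^ 3 + 3 * pd x 1 1 (t, Y t) * deriv (deriv Y) t + 3 * pd x 0 2 (t, Y t) * deriv Y t * deriv (deriv Y) t + pd x 0 1 (t, Y t) * deriv (deriv (deriv Y)) t)) * (pd x 1 0 (t, Y t) + pd x 0 1 (t, Y t) * deriv Y t) - 3 * (pd x 2 0 (t, Y t) + 2 * pd x 1 1 (t, Y t) * deriv Y t + pd x 0 2 (t, Y t) * deriv Y t ^ 2 + pd x 0 1 (t, Y t) * deriv (deriv Y) t) * ((pd y 2 0 (t, Y t) + 2 * pd y 1 1 (t, Y t) * deriv Y t + pd y 0 2 (t, Y t) * deriv Y t ^ 2 + pd y 0 1 (t, Y t) * deriv (deriv Y) t) * (pd x 1 0 (t, Y t) + pd x 0 1 (t, Y t) * deriv Y t) - (pd y 1 0 (t, Y t) + pd y 0 1 (t, Y t) * deriv Y t) * (pd x 2 0 (t, Y t) + 2 * pd x 1 1 (t, Y t) * deriv Y t + pd x 0 2 (t, Y t) * deriv Y t ^ 2 + pd x 0 1 (t, Y t) * deriv (deriv Y) t))) = 0 := by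
    have h3 : ((pd x 1 0 (t, Y t) + pd x 0 1 (t, Y t) * deriv Y t)) ^ 4 * (((pd y 3 0 (t, Y t) + 3 * pd y 2 1 (t, Y t) * deriv Y t + 3 * pd y 1 2 (t, Y t) * deriv Y t ^ 2 + pd y 0 3 (t, Y t) * deriv Y t ^ 3 + 3 * pd y 1 1 (t, Y t) * deriv (deriv Y) t + 3 * pd y 0 2 (t, Y t) * deriv Y t * deriv (deriv Y) t + pd y 0 1 (t, Y t) * deriv (deriv (deriv Y)) t) * (pd x 1 0 (t, Y t) + pd x 0 1 (t, Y t) * deriv Y t) - (pd y 1 0 (t, Y t) + pd y 0 1 (t, Y t) * deriv Y t) * (pd x 3 0 (t, Y t) + 3 * pd x 2 1 (t, Y t) * deriv Y t + 3 * pd x 1 2 (t, Y t) * deriv Y t ^ 2 + pd x 0 3 (t, Y t) * deriv Y t ^ 3 + 3 * pd x 1 1 (t, Y t) * deriv (deriv Y) t + 3 * pd x 0 2 (t, Y t) * deriv Y t * deriv (deriv Y) t + pd x 0 1 (t, Y t) * deriv (deriv (deriv Y)) t)) * (pd x 1 0 (t, Y t) + pd x 0 1 (t, Y t) * deriv Y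 t) - 3 * (pd x 2 0 (t, Y t) + 2 * pd x 1 1 (t, Y t) * deriv Y t + pd x 0 2 (t, Y t) * deriv Y t ^ 2 + pd x 0 1 (t, Y t) * deriv (deriv Y) t) * ((pd y 2 0 (t, Y t) + 2 * pd y 1 1 (t, Y t) * deriv Y t + pd y 0 2 (t, Y t) * deriv Y t ^ 2 + pd y 0 1 (t, Y t) * deriv (deriv Y) t) * (pd x 1 0 (t, Y t) + pd x 0 1 (t, Y t) * deriv Y t) - (pd y 1 0 (t, Y t) + pd y 0 1 (t, Y t) * deriv Y t) * (pd x 2 0 (t, Y t) + 2 * pd x 1 1 (t, Y t) * deriv Y t + pd x 0 2 (t, Y t) * deriv Y t ^ 2 + pd x 0 1 (t, Y t) * deriv (deriv Y) t))) = 0 := by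
      have h2' := (div_eq_zero_iff.mp h2.symm).resolve_right (pow_ne_zero 5 (by rwa [mul_comm (deriv Y t)]))
      norm_num only at h2'
      linear_combination (pd x 1 0 (t, Y t) + pd x 0 1 (t, Y t) * deriv Y t) ^ 3 * h2'
    rcases mul_eq_zero.mp h3 with h | h
    · exact absurd h (pow_ne_zero 4 hU)
    · exact h
  have eA0 : stmt4A 0 (jet3 x (t, Y t)) (jet3 y (t, Y t)) = (3*pd x 0 1 (t, Y t)*pd y 0 1 (t, Y t)*pd x 1 1 (t, Y t) + 3*pd x 0 1 (t, Y t)*pd y 1 0 (t, Y t)*pd x 0 2 (t, Y t) - 3*pd x 0 1 (t, Y t)*pd x 0 1 (t, Y t)*pd y 1 1 (t, Y t) - 6*pd x 1 0 (t, Y t)*pd y 0 1 (t, Y t)*pd x 0 2 (t, Y t) + 3*pd x 1 0 (t, Y t)*pd x 0 1 (t, Y t)*pd y 0 2 (t, Y t)) := rfl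
  have eA1 : stmt4A 1 (jet3 x (t, Y t)) (jet3 y (t, Y t)) = (3*pd x 0 1 (t, Y t)*pd y 0 1 (t, Y t)*pd x 2 0 (t, Y t) + 9*pd x 0 1 (t, Y t)*pd y 1 0 (t, Y t)*pd x 1 1 (t, Y t) - 3*pd x 0 1 (t, Y t)*pd x 0 1 (t, Y t)*pd y 2 0 (t, Y t) - 9*pd x 1 0 (t, Y t)*pd y 0 1 (t, Y t)*pd x 1 1 (t, Y t) - 3*pd x 1 0 (t, Y t)*pd y 1 0 (t, Y t)*pd x 0 2 (t, Y t) + 3*pd x 1 0 (t, Y t)*pd x 1 0 (t, Y t)*pd y 0 2 (t, Y t)) := rfl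
  have eA2 : stmt4A 2 (jet3 x (t, Y t)) (jet3 y (t, Y t)) = (6*pd x 0 1 (t, Y t)*pd y 1 0 (t, Y t)*pd x 2 0 (t, Y t) - 3*pd x 1 0 (t, Y t)*pd y 0 1 (t, Y t)*pd x 2 0 (t, Y t) - 3*pd x 1 0 (t, Y t)*pd y 1 0 (t, Y t)*pd x 1 1 (t, Y t) - 3*pd x 1 0 (t, Y t)*pd x 0 1 (t, Y t)*pd y 2 0 (t, Y t) + 3*pd x 1 0 (t, Y t)*pd x 1 0 (t, Y t)*pd y 1 1 (t, Y t)) := rfl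
  have eA3 : stmt4A 3 (jet3 x (t, Y t)) (jet3 y (t, Y t)) = (3*pd y 0 1 (t, Y t)*pd x 0 2 (t, Y t)*pd x 0 2 (t, Y t) - 3*pd x 0 1 (t, Y t)*pd x 0 2 (t, Y t)*pd y 0 2 (t, Y t) - pd x 0 1 (t, Y t)*pd y 0 1 (t, Y t)*pd x 0 3 (t, Y t) + pd x 0 1 (t, Y t)*pd x 0 1 (t, Y t)*pd y 0 3 (t, Y t)) := rfl
  have eA4 : stmt4A 4 (jet3 x (t, Y t)) (jet3 y (t, Y t)) = (12*pd y 0 1 (t, Y t)*pd x 1 1 (t, Y t)*pd x 0 2 (t, Y t) + 3*pd y 1 0 (t, Y t)*pd x 0 2 (t, Y t)*pd x 0 2 (t, Y t) - 6*pd x 0 1 (t, Y t)*pd x 0 2 (t, Y t)*pd y 1 1 (t, Y t) - 6*pd x 0 1 (t, Y t)*pd x 1 1 (t, Y t)*pd y 0 2 (t, Y t) - 3*pd x 0 1 (t, Y t)*pd y 0 1 (t, Y t)*pd x 1 2 (t, Y t) - pd x 0 1 (t, Y t)*pd y 1 0 (t, Y t)*pd x 0 3 (t, Y t) + 3*pd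 x 0 1 (t, Y t)*pd x 0 1 (t, Y t)*pd y 1 2 (t, Y t) - 3*pd x 1 0 (t, Y t)*pd x 0 2 (t, Y t)*pd y 0 2 (t, Y t) - pd x 1 0 (t, Y t)*pd y 0 1 (t, Y t)*pd x 0 3 (t, Y t) + 2*pd x 1 0 (t, Y t)*pd x 0 1 (t, Y t)*pd y 0 3 (t, Y t)) := rfl
  have eA5 : stmt4A 5 (jet3 x (t, Y t)) (jet3 y (t, Y t)) = (12*pd y 0 1 (t, Y t)*pd x 1 1 (t, Y t)*pd x 1 1 (t, Y t) + 6*pd y 0 1 (t, Y t)*pd x 2 0 (t, Y t)*pd x 0 2 (t, Y t) + 12*pd y 1 0 (t, Y t)*pd x 1 1 (t, Y t)*pd x 0 2 (t, Y t) - 3*pd x 0 1 (t, Y t)*pd x 0 2 (t, Y t)*pd y 2 0 (t, Y t) - 12*pd x 0 1 (t, Y t)*pd x 1 1 (t, Y t)*pd y 1 1 (t, Y t) - 3*pd x 0 1 (t, Y t)*pd x 2 0 (t, Y t)*pd y 0 2 (t, Y t) - 3*pd x 0 1 (t, Y t)*pd y 0 1 (t, Y t)*pd x 2 1 (t, Y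 t) - 3*pd x 0 1 (t, Y t)*pd y 1 0 (t, Y t)*pd x 1 2 (t, Y t) + 3*pd x 0 1 (t, Y t)*pd x 0 1 (t, Y t)*pd y 2 1 (t, Y t) - 6*pd x 1 0 (t, Y t)*pd x 0 2 (t, Y t)*pd y 1 1 (t, Y t) - 6*pd x 1 0 (t, Y t)*pd x 1 1 (t, Y t)*pd y 0 2 (t, Y t) - 3*pd x 1 0 (t, Y t)*pd y 0 1 (t, Y t)*pd x 1 2 (t, Y t) - pd x 1 0 (t, Y t)*pd y 1 0 (t, Y t)*pd x 0 3 (t, Y t) + 6*pd x 1 0 (t, Y t)*pd x 0 1 (t, Y t)*pd y 1 2 (t, Y t) + pd x 1 0 (t, Y t)*pd x 1 0 (t, Y t)*pd y 0 3 (t, Y t)) := rfl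
  have eA6 : stmt4A 6 (jet3 x (t, Y t)) (jet3 y (t, Y t)) = (12*pd y 0 1 (t, Y t)*pd x 2 0 (t, Y t)*pd x 1 1 (t, Y t) + 12*pd y 1 0 (t, Y t)*pd x 1 1 (t, Y t)*pd x 1 1 (t, Y t) + 6*pd y 1 0 (t, Y t)*pd x 2 0 (t, Y t)*pd x 0 2 (t, Y t) - 6*pd x 0 1 (t, Y t)*pd x 1 1 (t, Y t)*pd y 2 0 (t, Y t) - 6*pd x 0 1 (t, Y t)*pd x 2 0 (t, Y t)*pd y 1 1 (t, Y t) - pd x 0 1 (t, Y t)*pd y 0 1 (t, Y t)*pd x 3 0 (t, Y t) - 3*pd x 0 1 (t, Y t)*pd y 1 0 (t, Y t)*pd x 2 1 (t, Y t) + pd x 0 1 (t, Y t)*pd x 0 1 (t, Y t)*pd y 3 0 (t, Y t) - 3*pd x 1 0 (t, Y t)*pd x 0 2 (t, Y t)*pd y 2 0 (t, Y t) - 12*pd x 1 0 (t, Y t)*pd x 1 1 (t, Y t)*pd y 1 1 (t, Y t) - 3*pd x 1 0 (t, Y t)*pd x 2 0 (t, Y t)*pd y 0 2 (t, Y t) -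 3*pd x 1 0 (t, Y t)*pd y 0 1 (t, Y t)*pd x 2 1 (t, Y t) - 3*pd x 1 0 (t, Y t)*pd y 1 0 (t, Y t)*pd x 1 2 (t, Y t) + 6*pd x 1 0 (t, Y t)*pd x 0 1 (t, Y t)*pd y 2 1 (t, Y t) + 3*pd x 1 0 (t, Y t)*pd x 1 0 (t, Y t)*pd y 1 2 (t, Y t)) := rfl
  have eA7 : stmt4A 7 (jet3 x (t, Y t)) (jet3 y (t, Y t)) = (3*pd y 0 1 (t, Y t)*pd x 2 0 (t, Y t)*pd x 2 0 (t, Y t) + 12*pd y 1 0 (t, Y t)*pd x 2 0 (t, Y t)*pd x 1 1 (t, Y t) - 3*pd x 0 1 (t, Y t)*pd x 2 0 (t, Y t)*pd y 2 0 (t, Y t) - pd x 0 1 (t, Y t)*pd y 1 0 (t, Y t)*pd x 3 0 (t, Y t) - 6*pd x 1 0 (t, Y t)*pd x 1 1 (t, Y t)*pd y 2 0 (t, Y t) - 6*pd x 1 0 (t, Y t)*pd x 2 0 (t, Y t)*pd y 1 1 (t, Y t) - pd x 1 0 (t, Y t)*pd y 0 1 (t, Y t)*pd x 3 0 (t, Y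 t) - 3*pd x 1 0 (t, Y t)*pd y 1 0 (t, Y t)*pd x 2 1 (t, Y t) + 2*pd x 1 0 (t, Y t)*pd x 0 1 (t, Y t)*pd y 3 0 (t, Y t) + 3*pd x 1 0 (t, Y t)*pd x 1 0 (t, Y t)*pd y 2 1 (t, Y t)) := rfl
  have eA8 : stmt4A 8 (jet3 x (t, Y t)) (jet3 y (t, Y t)) = (3*pd y 1 0 (t, Y t)*pd x 2 0 (t, Y t)*pd x 2 0 (t, Y t) - 3*pd x 1 0 (t, Y t)*pd x 2 0 (t, Y t)*pd y 2 0 (t, Y t) - pd x 1 0 (t, Y t)*pd y 1 0 (t, Y t)*pd x 3 0 (t, Y t) + pd x 1 0 (t, Y t)*pd x 1 0 (t, Y t)*pd y 3 0 (t, Y t)) := rfl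
  rw [eA0, eA1, eA2, eA3, eA4, eA5, eA6, eA7, eA8]
  rw [div_add_div _ _ hU (mul_ne_zero hU hJ), eq_div_iff (mul_ne_zero hU (mul_ne_zero hU hJ))]
  linear_combination (-(pd x 1 0 (t, Y t) + pd x 0 1 (t, Y t) * deriv Y t)) * K
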